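/- Let C ⊆ ℝ^m be a nonempty closed convex set, let W̃ : ℝ^m → ℝ^n and L : ℝ^n → ℝ^k be linear maps, let N be a norm on ℝ^k satisfying N(y) ≥ ‖y‖₂ for all y ∈ ℝ^k, define J : ℝ^n → ℝ by J(f) = N(L f), and let f₀ ∈ ℝ^n. Assume there exists ε > 0 such that ‖L(W̃ α)‖₂ ≥ ε ‖α‖₂ for all α ∈ C. Then the minimization problem min_{α ∈ C} J(f₀ + W̃ α) has at least one solution, i.e., there exists α* ∈ C such that J(f₀ + W̃ α*) ≤ J(f₀ + W̃ α) for all α ∈ C. -/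

import Mathlib

/-!
The objective `α ↦ N (L (f₀ + W̃ α))` is continuous, because a seminorm on a finite-dimensional
space is convex and hence continuous. Since `N` dominates the Euclidean norm, condition (4.1)
bounds the objective below on `C` by `ε ‖α‖ - ‖L f₀‖`, so it tends to infinity along `C` and
attains its infimum on the closed set `C`.
-/

open Filter

lemma continuous_of_subadditive_of_abs_smul {E : Type*} [NormedAddCommGroup E] [NormedSpace ℝ E]
    [FiniteDimensional ℝ E] {N : E → ℝ} (hadd : ∀ x y, N (x + y) ≤ N x + N y)
    (hsmul : ∀ (c : ℝ) x, N (c • x) = |c| * N x) : Continuous N := by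
  let p : Seminorm ℝ E := .of N hadd fun c x => by rw [hsmul, Real.norm_eq_abs]
  exact continuousOn_univ.mp (p.convexOn.continuousOn isOpen_univ)

lemma ContinuousOn.exists_isMinOn_of_linear_lower_bound {E : Type*} [NormedAddCommGroup E]
    [ProperSpace E] {s : Set E} {f : E → ℝ} (hf : ContinuousOn f s) (hs : IsClosed s)
    (hne : s.Nonempty) {ε b : ℝ} (hε : 0 < ε) (hlow : ∀ x ∈ s, ε * ‖x‖ - b ≤ f x) :
    ∃ x ∈ s, IsMinOn f s x := by
  obtain ⟨x₀, hx₀⟩ := hne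
  refine hf.exists_isMinOn' hs hx₀ ?_
  have hfar : ∀ᶠ x in cocompact E, (f x₀ + b) / ε ≤ ‖x‖ :=
    tendsto_norm_cocompact_atTop.eventually_ge_atTop _
  filter_upwards [hfar.filter_mono inf_le_left, mem_inf_of_right (mem_principal_self s)]
    with x hx hxs
  rw [div_le_iff₀ hε] at hx
  linarith [hlow x hxs]

theorem existence_of_minimizer_general {m n k : ℕ}
    (C : Set (EuclideanSpace ℝ (Fin m)))
    (hCne : C.Nonempty) (hCclosed : IsClosed C)
    (Wt : EuclideanSpace ℝ (Fin m) →ₗ[ℝ] EuclideanSpace ℝ (Fin n))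
    (L : EuclideanSpace ℝ (Fin n) →ₗ[ℝ] EuclideanSpace ℝ (Fin k))
    (N : EuclideanSpace ℝ (Fin k) → ℝ)
    (hN_tri : ∀ y z, N (y + z) ≤ N y + N z)
    (hN_smul : ∀ (c : ℝ) (y : EuclideanSpace ℝ (Fin k)), N (c • y) = |c| * N y)
    (hN_ge : ∀ y, ‖y‖ ≤ N y)
    (J : EuclideanSpace ℝ (Fin n) → ℝ)
    (hJ : ∀ f, J f = N (L f))
    (f₀ : EuclideanSpace ℝ (Fin n))
    (ε : ℝ) (hε : 0 < ε)
    (hcoer : ∀ α ∈ C, ε * ‖α‖ ≤ ‖L (Wt α)‖) :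
    ∃ αstar ∈ C, ∀ α ∈ C, J (f₀ + Wt αstar) ≤ J (f₀ + Wt α) := by
  have hcont : Continuous fun α => N (L (f₀ + Wt α)) :=
    (continuous_of_subadditive_of_abs_smul hN_tri hN_smul).comp <|
      L.continuous_of_finiteDimensional.comp <|
        continuous_const.add Wt.continuous_of_finiteDimensional
  have hlow : ∀ α ∈ C, ε * ‖α‖ - ‖L f₀‖ ≤ N (L (f₀ + Wt α)) := fun α hα =>
    calc ε * ‖α‖ - ‖L f₀‖ ≤ ‖L (Wt α)‖ - ‖L f₀‖ := by linarith [hcoer α hα]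
      _ ≤ ‖L (Wt α) + L f₀‖ := norm_sub_le_norm_add _ _
      _ ≤ N (L (f₀ + Wt α)) := by rw [add_comm f₀, map_add]; exact hN_ge _
  obtain ⟨αstar, hαstar, hmin⟩ :=
    hcont.continuousOn.exists_isMinOn_of_linear_lower_bound hCclosed hCne hε hlow
  exact ⟨αstar, hαstar, fun α hα => by simpa only [hJ] using isMinOn_iff.mp hmin α hα⟩

/-- Existence of a minimizer for the variational wavelet
inpainting model `min_{α ∈ C} J(f₀ + W̃ α)` with `J f = N (L f)`, where `C` is a
nonempty closed convex subset of `ℝ^m`, `W̃` and `L` are linear maps, `N` is a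
norm dominating the Euclidean norm, and the coercivity condition (4.1)
`‖L (W̃ α)‖₂ ≥ ε ‖α‖₂` holds on `C`. -/
theorem existence_of_minimizer {m n k : ℕ}
    (C : Set (EuclideanSpace ℝ (Fin m)))
    (hCne : C.Nonempty) (hCclosed : IsClosed C) (hCconvex : Convex ℝ C)
    (Wt : EuclideanSpace ℝ (Fin m) →ₗ[ℝ] EuclideanSpace ℝ (Fin n))
    (L : EuclideanSpace ℝ (Fin n) →ₗ[ℝ] EuclideanSpace ℝ (Fin k))
    (N : EuclideanSpace ℝ (Fin k) → ℝ)
    (hN_tri : ∀ y z, N (y + z) ≤ N y + N z)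
    (hN_smul : ∀ (c : ℝ) (y : EuclideanSpace ℝ (Fin k)), N (c • y) = |c| * N y)
    (hN_ge : ∀ y, ‖y‖ ≤ N y)
    (J : EuclideanSpace ℝ (Fin n) → ℝ)
    (hJ : ∀ f, J f = N (L f))
    (f₀ : EuclideanSpace ℝ (Fin n))
    (ε : ℝ) (hε : 0 < ε)
    (hcoer : ∀ α ∈ C, ε * ‖α‖ ≤ ‖L (Wt α)‖) :
    ∃ αstar ∈ C, ∀ α ∈ C, J (f₀ + Wt αstar) ≤ J (f₀ + Wt α) :=
  existence_of_minimizer_general C hCne hCclosed Wt L N hN_tri hN_smul hN_ge J hJ f₀ ε hε hcoer
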